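/- arXiv:2107.00084 — 2 statements merged into one kernel-verified Lean document; each statement's English description precedes it below -/
import Mathlib

section
/- If Γ is a W-digraph with finite vertex set and F is a subfield of ℂ, then the number of connected components of Γ equals ⟨M(Γ)^F, ind⟩ = dim_{F(u)} {v ∈ M(Γ)^F : h v = ind(h) v for all h ∈ H^F}. -/
open scoped Classical

noncomputable section

/-- The combinatorial data of a `W`-digraph over the index set `B` of the simple reflections:
for each label `i : B`, every vertex `v` lies on exactly one edge with label `i`, joining `v`
to `mate i v ≠ v`; `head i v` records whether `v` is the head (i.e. the edge is directed into
`v`), and `dash i v` whether that edge is dashed (as opposed to solid). -/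
structure WDigraphData (B V : Type*) where
  mate : B → V → V
  head : B → V → Bool
  dash : B → V → Bool
  mate_mate : ∀ i v, mate i (mate i v) = v
  mate_ne : ∀ i v, mate i v ≠ v
  head_mate : ∀ i v, head i (mate i v) = !(head i v)
  dash_mate : ∀ i v, dash i (mate i v) = dash i v

namespace WDigraphData

variable {B V : Type*} (Γ : WDigraphData B V)

/-- `Γ` has a solid edge `a → b` with label `i`. -/
def Solid (i : B) (a b : V) : Prop :=
  Γ.head i a = false ∧ Γ.dash i a = false ∧ Γ.mate i a = b

/-- `Γ` has a dashed edge `a ⇢ b` with label `i`. -/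
def Dashed (i : B) (a b : V) : Prop :=
  Γ.head i a = false ∧ Γ.dash i a = true ∧ Γ.mate i a = b

/-- There is a directed edge (solid or dashed) from `a` to `b` in `Γ`. -/
def DirEdge (a b : V) : Prop :=
  ∃ i, Γ.head i a = false ∧ Γ.mate i a = b

/-- `Γ.In v` is the set of labels of edges of `Γ` directed into `v`. -/
def In (v : V) : Set B := {i | Γ.head i v = true}

/-- `N_Γ(J)`: the number of vertices `v` with `In(v) = J`. -/
def N (J : Set B) : ℕ := Nat.card {v : V // Γ.In v = J}

/-- The underlying undirected graph of `Γ`. -/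
def underlying : SimpleGraph V where
  Adj a b := ∃ i, Γ.mate i a = b
  symm := by
    constructor
    rintro a b ⟨i, rfl⟩
    exact ⟨i, Γ.mate_mate i a⟩
  loopless := by
    constructor
    rintro a ⟨i, h⟩
    exact Γ.mate_ne i a h

/-- `Γ` contains a closed directed path of positive length. -/
def HasDirCycle : Prop :=
  ∃ (n : ℕ) (f : ℕ → V), 0 < n ∧ f n = f 0 ∧ ∀ k < n, Γ.DirEdge (f k) (f (k + 1))

/-- `Γ` is acyclic: it contains no closed directed path of positive length. -/
def Acyclic : Prop := ¬ Γ.HasDirCycle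

/-- The connected component `c` of `Γ` is acyclic: `Γ` has no closed directed path of
positive length lying in `c`. -/
def AcyclicComponent (c : Γ.underlying.ConnectedComponent) : Prop :=
  ¬ ∃ (n : ℕ) (f : ℕ → V), 0 < n ∧ f n = f 0 ∧
      (∀ k < n, Γ.DirEdge (f k) (f (k + 1))) ∧ Γ.underlying.connectedComponentMk (f 0) = c

/-- `Γ_J`: remove from `Γ` all edges whose labels lie outside `J`. -/
def restrict (J : Set B) : WDigraphData J V where
  mate i v := Γ.mate i v
  head i v := Γ.head i v
  dash i v := Γ.dash i v
  mate_mate i v := Γ.mate_mate i v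
  mate_ne i v := Γ.mate_ne i v
  head_mate i v := Γ.head_mate i v
  dash_mate i v := Γ.dash_mate i v

variable (K : Type*) [Field K] (q : K)

/-- The image of a basis vector `v` under the operator `τ_i` giving the action of `T_{s_i}`
on `M(Γ)`: for a solid edge `α → β` with label `i`, `T_{s_i} α = β` and
`T_{s_i} β = q²α + (q²−1)β`; for a dashed edge `α ⇢ β` with label `i`,
`T_{s_i} α = qα + (q+1)β` and `T_{s_i} β = (q²−q)α + (q²−q−1)β`. -/
def tauFun (i : B) (v : V) : V →₀ K :=
  if Γ.head i v then
    if Γ.dash i v then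
      (q ^ 2 - q) • Finsupp.single (Γ.mate i v) 1 + (q ^ 2 - q - 1) • Finsupp.single v 1
    else
      q ^ 2 • Finsupp.single (Γ.mate i v) 1 + (q ^ 2 - 1) • Finsupp.single v 1
  else
    if Γ.dash i v then
      q • Finsupp.single v 1 + (q + 1) • Finsupp.single (Γ.mate i v) 1
    else
      Finsupp.single (Γ.mate i v) 1

/-- The operator `τ_i` on the free module `M(Γ)` with basis the vertices of `Γ`. -/
def tau (i : B) : (V →₀ K) →ₗ[K] (V →₀ K) :=
  Finsupp.lsum K fun v => LinearMap.toSpanSingleton K (V →₀ K) (Γ.tauFun K q i v)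

end WDigraphData

/-- The data of a `W`-graph in the sense of Gyoja: vertex set `X`, vertex labels
`I x ⊆ B`, and edge weights `mu : X × X → F`. -/
structure WGraphData (B X F : Type*) where
  I : X → Set B
  mu : X → X → F

namespace WGraphData

variable {B X F : Type*} (Ψ : WGraphData B X F)
variable (K : Type*) [Field F] [Field K] [Algebra F K] [Fintype X] (q : K)

/-- The image of the basis vector `x` under the operator by which `T_{s_i}` acts on `M(Ψ)`:
`T_{s_i} x = −x` if `i ∈ I x`, and `T_{s_i} x = q²x + q Σ_{y, i ∈ I y} μ(y,x) y` otherwise. -/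
def tauFun (i : B) (x : X) : X →₀ K :=
  if i ∈ Ψ.I x then -Finsupp.single x 1
  else q ^ 2 • Finsupp.single x 1 +
    q • ∑ y : X, if i ∈ Ψ.I y then algebraMap F K (Ψ.mu y x) • Finsupp.single y (1 : K) else 0

/-- The operator by which `T_{s_i}` acts on the free module `M(Ψ)` with basis `X`. -/
def tau (i : B) : (X →₀ K) →ₗ[K] (X →₀ K) :=
  Finsupp.lsum K fun x => LinearMap.toSpanSingleton K (X →₀ K) (Ψ.tauFun K q i x)

/-- `N_Ψ(J)`: the number of vertices `x` with `I x = J`. -/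
def N (J : Set B) : ℕ := Nat.card {x : X // Ψ.I x = J}

end WGraphData

/-- For a module structure on `M` given by an algebra morphism `ρ : H → End M` and a linear
character `lam` of `H`, the eigenspace `M_lam = {v ∈ M | h v = lam(h) v for all h ∈ H}`. -/
def charSpace {K M H : Type*} [Field K] [AddCommGroup M] [Module K M] [Ring H] [Algebra K H]
    (ρ : H →ₐ[K] Module.End K M) (lam : H →ₐ[K] K) : Submodule K M where
  carrier := {v | ∀ h, ρ h v = lam h • v}
  add_mem' := by
    intro a b ha hb h
    rw [map_add, ha h, hb h, ← smul_add]
  zero_mem' := by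
    intro h
    rw [map_zero, smul_zero]
  smul_mem' := by
    intro c a ha h
    rw [map_smul, ha h, smul_comm]

end

/-!
Under `ind` every `T_s` has eigenvalue `u²`. On `M(Γ)` the operator `T_s` acts on a vector `v`
by `(T_s v)(y) = u² v(y) + c_s(y) (v(y') − v(y))`, where `y'` is the other end of the `s`-edge
at `y` and `c_s(y)` is one of `1, u², u + 1, u² − u`, all nonzero in `F(u)`. Hence
`T_s v = u² v` for all `s` exactly when the coefficients of `v` are constant along edges, i.e.
constant on connected components. Since each `T_w` is a product of `T_s` along a reduced word
and the `T_w` span `H`, this describes `M(Γ)_ind`, whose dimension is therefore the number of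
components.
-/

namespace RatFunc

variable {K : Type*} [Field K]

theorem X_ne_C (a : K) : (X : RatFunc K) ≠ C a := by
  rw [← algebraMap_X, ← algebraMap_C]
  exact (algebraMap_injective K).ne (Polynomial.X_ne_C a)

theorem X_ne_one : (X : RatFunc K) ≠ 1 := by
  simpa using X_ne_C (1 : K)

theorem X_add_one_ne_zero : (X : RatFunc K) + 1 ≠ 0 := by
  rw [Ne, add_eq_zero_iff_eq_neg]
  simpa using X_ne_C (-1 : K)

end RatFunc

namespace SimpleGraph

variable {V : Type*} (G : SimpleGraph V) (K : Type*) [Field K]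

noncomputable def edgeConstant : Submodule K (V →₀ K) where
  carrier := {v | ∀ ⦃a b⦄, G.Adj a b → v a = v b}
  add_mem' ha hb _ _ hab := by simp [ha hab, hb hab]
  zero_mem' _ _ _ := rfl
  smul_mem' c _ hv _ _ hab := by simp [hv hab]

variable {G K}

theorem Walk.apply_eq_of_mem_edgeConstant {v : V →₀ K} (hv : v ∈ G.edgeConstant K) :
    ∀ {a b : V}, G.Walk a b → v a = v b
  | _, _, .nil => rfl
  | _, _, .cons hab p => (hv hab).trans (apply_eq_of_mem_edgeConstant hv p)

variable (G K) [Finite V]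

noncomputable def pullbackComponents : (G.ConnectedComponent → K) →ₗ[K] (V →₀ K) :=
  (Finsupp.linearEquivFunOnFinite K K V).symm.toLinearMap ∘ₗ
    LinearMap.funLeft K K G.connectedComponentMk

theorem pullbackComponents_apply (f : G.ConnectedComponent → K) (a : V) :
    G.pullbackComponents K f a = f (G.connectedComponentMk a) := rfl

theorem pullbackComponents_injective : Function.Injective (G.pullbackComponents K) :=
  (Finsupp.linearEquivFunOnFinite K K V).symm.injective.comp
    (LinearMap.funLeft_injective_of_surjective K K _ fun c => c.exists_rep)

theorem range_pullbackComponents :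
    LinearMap.range (G.pullbackComponents K) = G.edgeConstant K := by
  apply le_antisymm
  · rintro _ ⟨f, rfl⟩ a b hab
    simp only [pullbackComponents_apply, ConnectedComponent.connectedComponentMk_eq_of_adj hab]
  · intro v hv
    exact ⟨ConnectedComponent.lift (fun a => v a)
      fun _ _ p _ => Walk.apply_eq_of_mem_edgeConstant hv p, Finsupp.ext fun _ => rfl⟩

theorem finrank_edgeConstant :
    Module.finrank K (G.edgeConstant K) = Nat.card G.ConnectedComponent := by
  have := Fintype.ofFinite V
  have := Fintype.ofFinite G.ConnectedComponent
  rw [← range_pullbackComponents,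
    LinearMap.finrank_range_of_inj (pullbackComponents_injective G K),
    Module.finrank_fintype_fun_eq_card, Nat.card_eq_fintype_card]

end SimpleGraph

section charSpace

variable {K E H : Type*} [Field K] [AddCommGroup E] [Module K E] [Ring H] [Algebra K H]
  (ρ : H →ₐ[K] Module.End K E) (lam : H →ₐ[K] K)

theorem mem_charSpace_of_basis {ι : Type*} (b : Module.Basis ι K H) {v : E}
    (hv : ∀ j, ρ (b j) v = lam (b j) • v) : v ∈ charSpace ρ lam := by
  have hext : LinearMap.applyₗ v ∘ₗ ρ.toLinearMap = LinearMap.smulRight lam.toLinearMap v :=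
    b.ext hv
  exact fun h => LinearMap.congr_fun hext h

theorem CoxeterSystem.mem_charSpace_of_simple {B W : Type*} [Group W] {M : CoxeterMatrix B}
    (cs : CoxeterSystem M W) (T : W → H) (bT : Module.Basis W K H) (hbT : ∀ w, bT w = T w)
    (hT1 : T 1 = 1)
    (hTmul : ∀ (i : B) (w : W), cs.length w < cs.length (cs.simple i * w) →
      T (cs.simple i) * T w = T (cs.simple i * w))
    {v : E} (hv : ∀ i, ρ (T (cs.simple i)) v = lam (T (cs.simple i)) • v) :
    v ∈ charSpace ρ lam := by
  suffices h : ∀ n (w : W), cs.length w = n → ρ (T w) v = lam (T w) • v from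
    mem_charSpace_of_basis ρ lam bT fun w => hbT w ▸ h _ w rfl
  intro n
  induction n using Nat.strong_induction_on with
  | _ n ih =>
  intro w hw
  rcases eq_or_ne w 1 with rfl | hne
  · simp [hT1]
  obtain ⟨i, hi⟩ := cs.exists_leftDescent_of_ne_one hne
  have hT : T (cs.simple i) * T (cs.simple i * w) = T w := by
    simpa using hTmul i (cs.simple i * w) (by rw [cs.simple_mul_simple_cancel_left]; exact hi)
  rw [← hT, map_mul, map_mul, Module.End.mul_apply, ih _ (hw ▸ hi) _ rfl, map_smul, hv,
    smul_smul, mul_comm]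

end charSpace

namespace WDigraphData

variable {B V : Type*} (Γ : WDigraphData B V) {K : Type*} [Field K] (q : K)

def tauCoeff (i : B) (y : V) : K :=
  if Γ.dash i y then (if Γ.head i y then q + 1 else q ^ 2 - q)
  else (if Γ.head i y then 1 else q ^ 2)

theorem tauCoeff_ne_zero {q : K} (hq0 : q ≠ 0) (hq1 : q ≠ 1) (hqn : q + 1 ≠ 0)
    (i : B) (y : V) : Γ.tauCoeff q i y ≠ 0 := by
  have : q ^ 2 - q ≠ 0 := by
    rw [show q ^ 2 - q = q * (q - 1) by ring]
    exact mul_ne_zero hq0 (sub_ne_zero.mpr hq1)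
  unfold tauCoeff
  split_ifs <;> simp [*]

theorem tauFun_apply_eq_zero {i : B} {x y : V} (hx : x ≠ y) (hmx : Γ.mate i x ≠ y) :
    Γ.tauFun K q i x y = 0 := by
  unfold tauFun
  split_ifs <;> simp [hx, hmx]

theorem tau_apply [Finite V] (i : B) (v : V →₀ K) (y : V) :
    Γ.tau K q i v y = q ^ 2 * v y + Γ.tauCoeff q i y * (v (Γ.mate i y) - v y) := by
  have := Fintype.ofFinite V
  have hne : y ≠ Γ.mate i y := (Γ.mate_ne i y).symm
  have hsum : Γ.tau K q i v y = ∑ x, v x * Γ.tauFun K q i x y := by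
    rw [tau, Finsupp.lsum_apply, Finsupp.sum_apply, Finsupp.sum_fintype _ _ (by simp)]
    simp [LinearMap.toSpanSingleton_apply]
  -- only `y` and its `i`-mate contribute
  rw [hsum, ← Finset.sum_subset (Finset.subset_univ {y, Γ.mate i y}), Finset.sum_pair hne]
  · cases hH : Γ.head i y <;> cases hD : Γ.dash i y <;>
      simp [tauFun, tauCoeff, hH, hD, Γ.head_mate, Γ.dash_mate, Γ.mate_mate, hne] <;> ring
  · intro x _ hx
    simp only [Finset.mem_insert, Finset.mem_singleton, not_or] at hx
    refine mul_eq_zero_of_right _ (Γ.tauFun_apply_eq_zero q hx.1 fun h => hx.2 ?_)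
    rw [← h, Γ.mate_mate]

theorem tau_eq_sq_smul_iff [Finite V] {q : K} (hq0 : q ≠ 0) (hq1 : q ≠ 1) (hqn : q + 1 ≠ 0)
    (i : B) (v : V →₀ K) :
    Γ.tau K q i v = q ^ 2 • v ↔ ∀ y, v (Γ.mate i y) = v y := by
  simp only [Finsupp.ext_iff, tau_apply, Finsupp.smul_apply, smul_eq_mul, add_eq_left,
    mul_eq_zero, Γ.tauCoeff_ne_zero hq0 hq1 hqn, false_or, sub_eq_zero]

theorem mem_edgeConstant_underlying_iff (v : V →₀ K) :
    v ∈ Γ.underlying.edgeConstant K ↔ ∀ i y, v (Γ.mate i y) = v y := by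
  refine ⟨fun hv i y => (hv ⟨i, rfl⟩).symm, ?_⟩
  rintro hv a _ ⟨i, rfl⟩
  exact (hv i a).symm

end WDigraphData

theorem wdigraph_components_eq_ind_multiplicity_general
    {B W V : Type*} [Group W] {M : CoxeterMatrix B} (cs : CoxeterSystem M W)
    (F : Subfield ℂ)
    -- `H` is the Hecke algebra of `(W, S)` over `F(u)`, with standard basis `T`
    (H : Type*) [Ring H] [Algebra (RatFunc F) H]
    (T : W → H) (bT : Module.Basis W (RatFunc F) H) (hbT : ∀ w, bT w = T w)
    (hT1 : T 1 = 1)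
    (hTmul : ∀ (i : B) (w : W), cs.length w < cs.length (cs.simple i * w) →
      T (cs.simple i) * T w = T (cs.simple i * w))
    -- `Γ` is a `W`-digraph with finite vertex set, with `H^F`-module `M(Γ)^F` given by `ρ`
    [Finite V] (Γ : WDigraphData B V)
    (ρ : H →ₐ[RatFunc F] Module.End (RatFunc F) (V →₀ RatFunc F))
    (hρ : ∀ i : B, ρ (T (cs.simple i)) = Γ.tau (RatFunc F) RatFunc.X i)
    -- `ind` is the index character of `H^F`
    (ind : H →ₐ[RatFunc F] RatFunc F)
    (hind : ∀ w : W, ind (T w) = (RatFunc.X : RatFunc F) ^ (2 * cs.length w)) :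
    Nat.card Γ.underlying.ConnectedComponent =
      Module.finrank (RatFunc F) (charSpace ρ ind) := by
  have hsimple : ∀ i v, ρ (T (cs.simple i)) v = ind (T (cs.simple i)) • v ↔
      ∀ y, v (Γ.mate i y) = v y := by
    intro i v
    rw [hρ, hind, cs.length_simple, mul_one]
    exact Γ.tau_eq_sq_smul_iff RatFunc.X_ne_zero RatFunc.X_ne_one RatFunc.X_add_one_ne_zero i v
  have hspace : charSpace ρ ind = Γ.underlying.edgeConstant (RatFunc F) := by
    ext v
    rw [Γ.mem_edgeConstant_underlying_iff]
    refine ⟨fun hv i => (hsimple i v).mp (hv _), fun hv => ?_⟩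
    exact cs.mem_charSpace_of_simple ρ ind T bT hbT hT1 hTmul fun i => (hsimple i v).mpr (hv i)
  rw [hspace, SimpleGraph.finrank_edgeConstant]

/-- If `Γ` is a `W`-digraph with finite vertex set and `F` is a subfield
of `ℂ`, then the number of connected components of `Γ` equals
`⟨M(Γ)^F, ind⟩ = dim_{F(u)} {v ∈ M(Γ)^F : h v = ind(h) v for all h ∈ H^F}`. -/
theorem wdigraph_components_eq_ind_multiplicity
    {B W V : Type*} [Group W] {M : CoxeterMatrix B} (cs : CoxeterSystem M W)
    (F : Subfield ℂ)
    -- `H` is the Hecke algebra of `(W, S)` over `F(u)`, with standard basis `T`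
    (H : Type*) [Ring H] [Algebra (RatFunc F) H]
    (T : W → H) (bT : Module.Basis W (RatFunc F) H) (hbT : ∀ w, bT w = T w)
    (hT1 : T 1 = 1)
    (hTmul : ∀ (i : B) (w : W), cs.length w < cs.length (cs.simple i * w) →
      T (cs.simple i) * T w = T (cs.simple i * w))
    (hTsq : ∀ i : B, T (cs.simple i) * T (cs.simple i) =
      (RatFunc.X ^ 2 : RatFunc F) • (1 : H) +
        ((RatFunc.X ^ 2 - 1 : RatFunc F)) • T (cs.simple i))
    -- `Γ` is a `W`-digraph with finite vertex set, with `H^F`-module `M(Γ)^F` given by `ρ`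
    [Finite V] (Γ : WDigraphData B V)
    (ρ : H →ₐ[RatFunc F] Module.End (RatFunc F) (V →₀ RatFunc F))
    (hρ : ∀ i : B, ρ (T (cs.simple i)) = Γ.tau (RatFunc F) RatFunc.X i)
    -- `ind` is the index character of `H^F`
    (ind : H →ₐ[RatFunc F] RatFunc F)
    (hind : ∀ w : W, ind (T w) = (RatFunc.X : RatFunc F) ^ (2 * cs.length w)) :
    Nat.card Γ.underlying.ConnectedComponent =
      Module.finrank (RatFunc F) (charSpace ρ ind) :=
  wdigraph_components_eq_ind_multiplicity_general cs F H T bT hbT hT1 hTmul Γ ρ hρ ind hind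
end

section
/- If F is a subfield of ℂ, Ψ is a W-graph over F with vertex-labeling function x ↦ I_x ⊆ S, and M(Ψ)_{ind} ≠ {0} (i.e. some nonzero v ∈ M(Ψ) satisfies h v = ind(h) v for all h ∈ H^F), then there exists a vertex x₀ of Ψ with I_{x₀} = ∅. -/
open scoped Classical

/-!
The argument is a degree count at infinity. Pick a vertex `x` at which the coefficient of
`v` has maximal valuation at infinity (i.e. maximal degree as a rational function in `u`).
If some `s ∈ I_x`, the `x`-coefficient of `T_s v = u² v` reads
`-v_x + u Σ_{s ∉ I_z} μ(x,z) v_z = u² v_x`, and the left-hand side has degree at most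
`1 + deg v_x`, whereas the right-hand side has degree `2 + deg v_x`.
-/

theorem Valuation.lt_of_mul_eq_sq_add_one_mul {K Γ₀ : Type*} [Field K]
    [LinearOrderedCommGroupWithZero Γ₀] (ν : Valuation K Γ₀) {q a s : K}
    (hq : 1 < ν q) (ha : a ≠ 0) (h : q * s = (q ^ 2 + 1) * a) : ν a < ν s := by
  have hq0 : ν q ≠ 0 := (zero_lt_one.trans hq).ne'
  have hsq : ν (q ^ 2 + 1) = ν q ^ 2 := by
    rw [ν.map_add_eq_of_lt_left (by rw [map_pow, ν.map_one]; exact one_lt_pow₀ hq two_ne_zero),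
      map_pow]
  have hs : ν s = ν q * ν a := by
    apply mul_left_cancel₀ hq0
    rw [← map_mul, h, map_mul, hsq, pow_two, mul_assoc]
  rw [hs]
  exact lt_mul_of_one_lt_left (zero_lt_iff.mpr (ν.ne_zero_iff.mpr ha)) hq

namespace WGraphData

variable {B X F K : Type*} [Field F] [Field K] [Algebra F K] [Fintype X]
  (Ψ : WGraphData B X F) (q : K)

theorem tau_apply (i : B) (v : X →₀ K) (x : X) :
    Ψ.tau K q i v x = ∑ z, v z * Ψ.tauFun K q i z x := by
  rw [tau, Finsupp.lsum_apply, Finsupp.sum_fintype _ _ (by simp), Finsupp.finsetSum_apply]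
  simp [LinearMap.toSpanSingleton_apply]

theorem tauFun_apply_of_mem {i : B} {x : X} (hx : i ∈ Ψ.I x) (z : X) :
    Ψ.tauFun K q i z x =
      if i ∈ Ψ.I z then (if z = x then -1 else 0) else q * algebraMap F K (Ψ.mu x z) := by
  unfold tauFun
  split_ifs with hz hzx
  · simp [hzx]
  · simp [hzx]
  · have hzx : z ≠ x := by rintro rfl; exact hz hx
    have hcoeff : ∀ y, (if i ∈ Ψ.I y then
        algebraMap F K (Ψ.mu y z) • Finsupp.single y (1 : K) else 0) x =
        if y = x then algebraMap F K (Ψ.mu x z) else 0 := by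
      intro y
      by_cases hy : y = x
      · subst hy; simp [hx, Algebra.smul_def]
      · by_cases hyi : i ∈ Ψ.I y <;> simp [hyi, hy]
    simp only [Finsupp.add_apply, Finsupp.smul_apply, Finsupp.finsetSum_apply, hcoeff,
      Finset.sum_ite_eq', Finset.mem_univ, if_true, Finsupp.single_apply, hzx, if_false,
      smul_eq_mul, mul_zero, zero_add]

theorem tau_apply_of_mem {i : B} {x : X} (hx : i ∈ Ψ.I x) (v : X →₀ K) :
    Ψ.tau K q i v x =
      -v x + q * ∑ z with i ∉ Ψ.I z, algebraMap F K (Ψ.mu x z) * v z := by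
  rw [tau_apply]
  simp only [Ψ.tauFun_apply_of_mem q hx, mul_ite, mul_neg, mul_one, mul_zero]
  rw [Finset.sum_ite, Finset.sum_ite_eq', if_pos (by simpa using hx), Finset.mul_sum]
  congr 1
  exact Finset.sum_congr rfl fun z _ => by ring

theorem exists_I_eq_empty_of_tau_eq_sq_smul {Γ₀ : Type*} [LinearOrderedCommGroupWithZero Γ₀]
    (ν : Valuation K Γ₀) (hq : 1 < ν q) (hμ : ∀ x y, ν (algebraMap F K (Ψ.mu x y)) ≤ 1)
    {v : X →₀ K} (hv : v ≠ 0) (hτ : ∀ i, Ψ.tau K q i v = q ^ 2 • v) :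
    ∃ x, Ψ.I x = ∅ := by
  obtain ⟨z, hz⟩ := Finsupp.ne_iff.mp hv
  obtain ⟨x, -, hmax⟩ := Finset.univ.exists_max_image (fun z => ν (v z)) ⟨z, Finset.mem_univ z⟩
  have hx : v x ≠ 0 := ν.ne_zero_iff.mp
    ((zero_lt_iff.mpr (ν.ne_zero_iff.mpr hz)).trans_le (hmax z (Finset.mem_univ z))).ne'
  refine ⟨x, Set.eq_empty_of_forall_notMem fun i hi => ?_⟩
  set S := ∑ z with i ∉ Ψ.I z, algebraMap F K (Ψ.mu x z) * v z
  have hcoeff : q * S = (q ^ 2 + 1) * v x := by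
    have hτx := DFunLike.congr_fun (hτ i) x
    rw [Ψ.tau_apply_of_mem q hi, Finsupp.smul_apply, smul_eq_mul] at hτx
    linear_combination hτx
  have hS : ν S ≤ ν (v x) := ν.map_sum_le fun z _ => by
    rw [map_mul]
    exact mul_le_of_le_one_of_le (hμ x z) (hmax z (Finset.mem_univ z))
  exact not_lt.mpr hS (ν.lt_of_mul_eq_sq_add_one_mul hq hx hcoeff)

end WGraphData

theorem wgraph_ind_eigenvector_empty_label_general
    {B W X : Type*} [Group W] {M : CoxeterMatrix B} (cs : CoxeterSystem M W)
    (F : Subfield ℂ)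
    -- `H` is the Hecke algebra of `(W, S)` over `F(u)`, with standard basis `T`
    (H : Type*) [Ring H] [Algebra (RatFunc F) H]
    (T : W → H)
    -- `Ψ` is a `W`-graph over `F`, with `H^F`-module `M(Ψ)` given by `σ`
    [Fintype X] (Ψ : WGraphData B X F)
    (σ : H →ₐ[RatFunc F] Module.End (RatFunc F) (X →₀ RatFunc F))
    (hσ : ∀ i : B, σ (T (cs.simple i)) = Ψ.tau (RatFunc F) RatFunc.X i)
    -- `ind` is the index character of `H^F`
    (ind : H →ₐ[RatFunc F] RatFunc F)
    (hind : ∀ w : W, ind (T w) = (RatFunc.X : RatFunc F) ^ (2 * cs.length w))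
    -- `M(Ψ)_{ind} ≠ {0}`
    (v : X →₀ RatFunc F) (hv : v ≠ 0) (hvind : ∀ h : H, σ h v = ind h • v) :
    ∃ x₀ : X, Ψ.I x₀ = ∅ := by
  refine Ψ.exists_I_eq_empty_of_tau_eq_sq_smul RatFunc.X (RatFunc.inftyValuation F)
    ?_ ?_ hv fun i => ?_
  · rw [RatFunc.inftyValuation.X, ← WithZero.exp_zero, WithZero.exp_lt_exp]
    exact one_pos
  · intro x y
    rcases eq_or_ne (Ψ.mu x y) 0 with h | h
    · simp [h]
    · exact (Valuation.IsTrivialOn.eq_one _ h).le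
  · have hi := hvind (T (cs.simple i))
    rwa [hσ, hind, cs.length_simple, mul_one] at hi

/-- If `F` is a subfield of `ℂ`, `Ψ` is a `W`-graph over `F` with
vertex labels `I_x ⊆ S`, and `M(Ψ)_{ind} ≠ {0}`, then some vertex `x₀` of `Ψ` has
`I_{x₀} = ∅`. -/
theorem wgraph_ind_eigenvector_empty_label
    {B W X : Type*} [Group W] {M : CoxeterMatrix B} (cs : CoxeterSystem M W)
    (F : Subfield ℂ)
    -- `H` is the Hecke algebra of `(W, S)` over `F(u)`, with standard basis `T`
    (H : Type*) [Ring H] [Algebra (RatFunc F) H]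
    (T : W → H) (bT : Module.Basis W (RatFunc F) H) (hbT : ∀ w, bT w = T w)
    (hT1 : T 1 = 1)
    (hTmul : ∀ (i : B) (w : W), cs.length w < cs.length (cs.simple i * w) →
      T (cs.simple i) * T w = T (cs.simple i * w))
    (hTsq : ∀ i : B, T (cs.simple i) * T (cs.simple i) =
      (RatFunc.X ^ 2 : RatFunc F) • (1 : H) +
        ((RatFunc.X ^ 2 - 1 : RatFunc F)) • T (cs.simple i))
    -- `Ψ` is a `W`-graph over `F`, with `H^F`-module `M(Ψ)` given by `σ`
    [Fintype X] (Ψ : WGraphData B X F)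
    (σ : H →ₐ[RatFunc F] Module.End (RatFunc F) (X →₀ RatFunc F))
    (hσ : ∀ i : B, σ (T (cs.simple i)) = Ψ.tau (RatFunc F) RatFunc.X i)
    -- `ind` is the index character of `H^F`
    (ind : H →ₐ[RatFunc F] RatFunc F)
    (hind : ∀ w : W, ind (T w) = (RatFunc.X : RatFunc F) ^ (2 * cs.length w))
    -- `M(Ψ)_{ind} ≠ {0}`
    (v : X →₀ RatFunc F) (hv : v ≠ 0) (hvind : ∀ h : H, σ h v = ind h • v) :
    ∃ x₀ : X, Ψ.I x₀ = ∅ :=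
  wgraph_ind_eigenvector_empty_label_general cs F H T Ψ σ hσ ind hind v hv hvind
end
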